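/- arXiv:1305.6691 — 4 statements merged into one kernel-verified Lean document; each statement's English description precedes it below -/
import Mathlib

section
/- Let X be a real Banach space, let A : X ⇉ X* be monotone, and let B : X ⇉ X* be maximally monotone. Suppose star(dom A) ∩ int(dom B) ≠ ∅, and suppose (z, z*) ∈ X × X* with z ∈ dom A is monotonically related to gra(A + B). Then z ∈ dom B. -/
open Set Filter Topology

noncomputable section

variable {X : Type*} [NormedAddCommGroup X] [NormedSpace ℝ X]

/-- A set-valued operator `A : X ⇉ X*`, identified with its graph,
is monotone if `⟨x − y, x* − y*⟩ ≥ 0` for all `(x, x*), (y, y*)` in the graph. -/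
def IsMonotoneOp (A : Set (X × (X →L[ℝ] ℝ))) : Prop :=
  ∀ p ∈ A, ∀ q ∈ A, 0 ≤ (p.2 - q.2) (p.1 - q.1)

/-- `A` is maximally monotone if it is monotone and its graph is not properly contained
in the graph of any monotone operator. -/
def IsMaxMonotoneOp (A : Set (X × (X →L[ℝ] ℝ))) : Prop :=
  IsMonotoneOp A ∧ ∀ B : Set (X × (X →L[ℝ] ℝ)), IsMonotoneOp B → A ⊆ B → B = A

/-- The domain of a set-valued operator. -/
def opDom (A : Set (X × (X →L[ℝ] ℝ))) : Set X :=
  {x | ∃ xs, (x, xs) ∈ A}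

/-- `(z, z*)` is monotonically related to `S` if `⟨z − y, z* − y*⟩ ≥ 0` for all `(y, y*) ∈ S`. -/
def MonotonicallyRelated (S : Set (X × (X →L[ℝ] ℝ))) (p : X × (X →L[ℝ] ℝ)) : Prop :=
  ∀ q ∈ S, 0 ≤ (p.2 - q.2) (p.1 - q.1)

/-- A maximally monotone operator `A` is of type (FPV) if for every open convex set `U`
meeting `dom A`, every `(x, x*)` with `x ∈ U` monotonically related to
`gra A ∩ (U × X*)` belongs to `gra A`. -/
def IsFPV (A : Set (X × (X →L[ℝ] ℝ))) : Prop :=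
  IsMaxMonotoneOp A ∧
    ∀ U : Set X, IsOpen U → Convex ℝ U → (U ∩ opDom A).Nonempty →
      ∀ x : X, ∀ xs : X →L[ℝ] ℝ, x ∈ U →
        MonotonicallyRelated (A ∩ (U ×ˢ (univ : Set (X →L[ℝ] ℝ)))) (x, xs) →
        (x, xs) ∈ A

/-- The graph of the sum `A + B`: `(A + B)x = {a* + b* : a* ∈ A x, b* ∈ B x}`. -/
def opSum (A B : Set (X × (X →L[ℝ] ℝ))) : Set (X × (X →L[ℝ] ℝ)) :=
  {p | ∃ as bs, (p.1, as) ∈ A ∧ (p.1, bs) ∈ B ∧ p.2 = as + bs}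

/-- The star (centre) of a set `C`: points `x ∈ C` with `[x, c] ⊆ C` for all `c ∈ C`. -/
def starSet (C : Set X) : Set X :=
  {x ∈ C | ∀ c ∈ C, segment ℝ x c ⊆ C}

/-- The Fitzpatrick function of `A`:
`F_A(x, x*) = sup_{(a, a*) ∈ gra A} (⟨x, a*⟩ + ⟨a, x*⟩ − ⟨a, a*⟩)`, with values in `(−∞, +∞]`. -/
def fitz (A : Set (X × (X →L[ℝ] ℝ))) (p : X × (X →L[ℝ] ℝ)) : EReal :=
  ⨆ q ∈ A, ((q.2 p.1 + p.2 q.1 - q.2 q.1 : ℝ) : EReal)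

/-!
Suppose `z ∉ dom B` and take `x₀ ∈ star (dom A) ∩ int (dom B)`. The open segment `(x₀, z)` lies in
`dom A`; for `x` on it with `a* ∈ A x`, `b* ∈ B x`, monotonicity of `A` and the relation of
`(z, z*)` to `A + B` bound `b*` in the direction `z - x₀`, and the local boundedness of `B` at the
interior point `x₀` (Banach–Steinhaus) turns this into a bound on `‖b*‖` along the whole segment.

Such a bound is impossible while `z ∉ dom B`: by weak-* compactness the last point `x` of the
segment in `dom B` still lies in `dom B`, and it is not interior. As `int (dom B)` is convex and
dense in `dom B`, some `f` supports `dom B` at `x` with `f x₀ < f x`, so `B x` contains the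
unbounded ray `b* + ℝ₊ f`.

Convexity of `int (dom B)` rests on: if `B` is bounded near `c` and `w ∈ dom B`, then
`y = c + θ (w - c) ∈ dom B` for `0 ≤ θ < 1`. A point of `B y` is a weak-* cluster point of
Hahn–Banach solutions of finitely many of the inequalities `⟨y - a, η - a*⟩ ≥ 0`,
`(a, a*) ∈ gra B`; each finite system is solvable because convex combinations `(x, x*, S)` of graph
points satisfy `F_B (x, x*) ≤ S`, and that bound controls `⟨y, x*⟩ - S` by a multiple of `‖y - x‖`.
-/

theorem ContinuousLinearMap.norm_le_of_forall_apply_le {f : X →L[ℝ] ℝ} {C : ℝ}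
    (h : ∀ v : X, ‖v‖ ≤ 1 → f v ≤ C) : ‖f‖ ≤ C := by
  have hC : 0 ≤ C := by simpa using h 0 (by simp)
  refine f.opNorm_le_of_unit_norm hC fun v hv => abs_le.2 ⟨?_, h v hv.le⟩
  have := h (-v) (by simp [hv])
  rw [map_neg] at this
  linarith

theorem sum_mul_le_mul_norm_sum_smul {ι : Type*} {s : Finset ι} {a : ι → X} {c : ι → ℝ} {ρ : ℝ}
    (h : ∀ w : ι → ℝ, (∀ i ∈ s, 0 ≤ w i) → ∑ i ∈ s, w i = 1 →
      ∑ i ∈ s, w i * c i ≤ ρ * ‖∑ i ∈ s, w i • a i‖)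
    {w : ι → ℝ} (hw : ∀ i ∈ s, 0 ≤ w i) : ∑ i ∈ s, w i * c i ≤ ρ * ‖∑ i ∈ s, w i • a i‖ := by
  obtain hW | hW := (Finset.sum_nonneg hw).eq_or_lt
  · have hw₀ : ∀ i ∈ s, w i = 0 := (Finset.sum_eq_zero_iff_of_nonneg hw).1 hW.symm
    rw [Finset.sum_eq_zero fun i hi => by rw [hw₀ i hi, zero_mul],
      Finset.sum_eq_zero fun i hi => by rw [hw₀ i hi, zero_smul], norm_zero, mul_zero]
  · have h₁ := h (fun i => (∑ j ∈ s, w j)⁻¹ * w i)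
      (fun i hi => mul_nonneg (inv_nonneg.2 hW.le) (hw i hi))
      (by rw [← Finset.mul_sum, inv_mul_cancel₀ hW.ne'])
    simp only [mul_assoc, ← Finset.mul_sum, ← smul_smul, ← Finset.smul_sum, norm_smul,
      Real.norm_eq_abs, abs_inv, abs_of_pos hW] at h₁
    rw [mul_left_comm] at h₁
    exact (mul_le_mul_iff_right₀ (inv_pos.2 hW)).1 h₁

theorem exists_norm_le_forall_nonneg_le (f : X × ℝ →L[ℝ] ℝ) {ρ : ℝ} (hρ : 0 ≤ ρ)
    (hf : ∀ p : X × ℝ, ρ * ‖p.1‖ < p.2 → f p < 0) :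
    ∃ η : X →L[ℝ] ℝ, ‖η‖ ≤ ρ ∧ ∀ p : X × ℝ, 0 ≤ f p → p.2 ≤ η p.1 := by
  set β := f (0, 1)
  have hβ : β < 0 := hf (0, 1) (by simp)
  have hsplit : ∀ p : X × ℝ, f p = f (p.1, 0) + p.2 * β := fun p => by
    conv_lhs => rw [show p = (p.1, 0) + p.2 • (0, 1) by ext <;> simp]
    rw [map_add, map_smul, smul_eq_mul]
  refine ⟨(-β)⁻¹ • f.comp (ContinuousLinearMap.inl ℝ X ℝ), ?_, fun p hp => ?_⟩
  · refine ContinuousLinearMap.norm_le_of_forall_apply_le fun v hv => ?_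
    suffices h : ∀ r, ρ * ‖v‖ < r → (-β)⁻¹ * f (v, 0) ≤ r by
      simpa using (le_of_forall_gt_imp_ge_of_dense h).trans (by nlinarith [norm_nonneg v])
    intro r hr
    have := hf (v, r) hr
    rw [hsplit] at this
    rw [inv_mul_le_iff₀ (by linarith)]
    nlinarith
  · rw [hsplit] at hp
    simp only [smul_apply, ContinuousLinearMap.comp_apply, ContinuousLinearMap.inl_apply,
      smul_eq_mul]
    rw [le_inv_mul_iff₀ (by linarith)]
    linarith

theorem exists_norm_le_forall_mem_le_apply_of_sum_le {ι : Type*} (s : Finset ι) (a : ι → X)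
    (c : ι → ℝ) {ρ : ℝ} (hρ : 0 ≤ ρ)
    (h : ∀ w : ι → ℝ, (∀ i ∈ s, 0 ≤ w i) → ∑ i ∈ s, w i = 1 →
      ∑ i ∈ s, w i * c i ≤ ρ * ‖∑ i ∈ s, w i • a i‖) :
    ∃ η : X →L[ℝ] ℝ, ‖η‖ ≤ ρ ∧ ∀ i ∈ s, c i ≤ η (a i) := by
  classical
  -- separate the open cone `{ρ ‖x‖ < r}` from the cone spanned by the points `(a i, c i)`
  set U : Set (X × ℝ) := {p | ρ * ‖p.1‖ < p.2}
  set K : Set (X × ℝ) := {p | ∃ w : ι → ℝ, (∀ i ∈ s, 0 ≤ w i) ∧ p = ∑ i ∈ s, w i • (a i, c i)}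
  have hUo : IsOpen U := isOpen_lt (by fun_prop) continuous_snd
  have hUc : Convex ℝ U := by
    simpa using ((convexOn_norm convex_univ).smul hρ).convex_strict_epigraph
  have hKc : Convex ℝ K := by
    rintro _ ⟨w, hw, rfl⟩ _ ⟨w', hw', rfl⟩ α β hα hβ -
    refine ⟨fun i => α * w i + β * w' i, fun i hi =>
      add_nonneg (mul_nonneg hα (hw i hi)) (mul_nonneg hβ (hw' i hi)), ?_⟩
    simp only [Finset.smul_sum, smul_smul, add_smul, Finset.sum_add_distrib]
  have hdisj : Disjoint U K := by
    rw [Set.disjoint_left]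
    rintro p hpU ⟨w, hw, rfl⟩
    have := sum_mul_le_mul_norm_sum_smul h hw
    simp only [U, Set.mem_ofPred_eq, Prod.fst_sum, Prod.snd_sum, Prod.smul_fst, Prod.smul_snd,
      smul_eq_mul] at hpU
    linarith
  obtain ⟨f, u, hfU, hfK⟩ := geometric_hahn_banach_open hUc hUo hKc hdisj
  have hu : u ≤ 0 := by simpa using hfK 0 ⟨0, by simp, by simp⟩
  obtain ⟨η, hη, hηf⟩ := exists_norm_le_forall_nonneg_le f hρ fun p hp => (hfU p hp).trans_le hu
  refine ⟨η, hη, fun i hi => hηf (a i, c i) ?_⟩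
  -- `f ≥ u` on the cone `K` forces `f ≥ 0` there
  by_contra! hneg
  set t := (u - 1) / f (a i, c i)
  have ht : 0 ≤ t := div_nonneg_of_nonpos (by linarith) hneg.le
  have hmem : t • (a i, c i) ∈ K := ⟨fun j => if j = i then t else 0,
    fun j _ => by by_cases hj : j = i <;> simp [hj, ht],
    by simp [ite_smul, Finset.sum_ite_eq', hi]⟩
  have := hfK _ hmem
  rw [map_smul, smul_eq_mul, div_mul_cancel₀ _ hneg.ne] at this
  linarith

theorem exists_norm_le_forall_le_apply_of_finset {ι : Type*} (a : ι → X) (c : ι → ℝ) {ρ : ℝ}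
    (h : ∀ s : Finset ι, ∃ η : X →L[ℝ] ℝ, ‖η‖ ≤ ρ ∧ ∀ i ∈ s, c i ≤ η (a i)) :
    ∃ η : X →L[ℝ] ℝ, ‖η‖ ≤ ρ ∧ ∀ i, c i ≤ η (a i) := by
  set ball := WeakDual.toStrongDual ⁻¹' Metric.closedBall (0 : X →L[ℝ] ℝ) ρ
  set t : ι → Set (WeakDual ℝ X) := fun i => {ξ | c i ≤ ξ (a i)}
  have ht : ∀ i, IsClosed (t i) := fun i =>
    isClosed_le continuous_const (WeakDual.eval_continuous _)
  obtain ⟨ξ, hξ, hξt⟩ := (WeakDual.isCompact_closedBall 0 ρ).inter_iInter_nonempty t ht fun s => by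
    obtain ⟨η, hη, hηs⟩ := h s
    exact ⟨StrongDual.toWeakDual η, by simpa [ball] using hη, Set.mem_iInter₂.2 hηs⟩
  exact ⟨WeakDual.toStrongDual ξ, by simpa [ball] using hξ, Set.mem_iInter.1 hξt⟩

theorem exists_norm_le_forall_le_apply_of_sum_le {ι : Type*} (a : ι → X) (c : ι → ℝ) {ρ : ℝ}
    (hρ : 0 ≤ ρ)
    (h : ∀ (s : Finset ι) (w : ι → ℝ), (∀ i ∈ s, 0 ≤ w i) → ∑ i ∈ s, w i = 1 →
      ∑ i ∈ s, w i * c i ≤ ρ * ‖∑ i ∈ s, w i • a i‖) :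
    ∃ η : X →L[ℝ] ℝ, ‖η‖ ≤ ρ ∧ ∀ i, c i ≤ η (a i) :=
  exists_norm_le_forall_le_apply_of_finset a c fun s =>
    exists_norm_le_forall_mem_le_apply_of_sum_le s a c hρ (h s)

section Monotone

variable {B : Set (X × (X →L[ℝ] ℝ))}

open Metric

theorem IsMonotoneOp.apply_sub_le (hB : IsMonotoneOp B) {p q : X × (X →L[ℝ] ℝ)}
    (hp : p ∈ B) (hq : q ∈ B) : q.2 (p.1 - q.1) ≤ p.2 (p.1 - q.1) := by
  simpa [sub_nonneg] using hB p hp q hq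

theorem IsMaxMonotoneOp.mem_of_monotonicallyRelated (hB : IsMaxMonotoneOp B)
    {p : X × (X →L[ℝ] ℝ)} (h : MonotonicallyRelated B p) : p ∈ B := by
  have hmono : IsMonotoneOp (insert p B) := by
    rintro q (rfl | hq) r (rfl | hr)
    · simp
    · exact h r hr
    · rw [← neg_sub r.2, ← neg_sub r.1, map_neg, neg_apply, neg_neg]
      exact h q hq
    · exact hB.1 q hq r hr
  exact hB.2 _ hmono (subset_insert p B) ▸ mem_insert p B

theorem fitz_le_coe_iff {p : X × (X →L[ℝ] ℝ)} {S : ℝ} :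
    fitz B p ≤ S ↔ ∀ q ∈ B, q.2 p.1 + p.2 q.1 - q.2 q.1 ≤ S := by
  simp only [fitz, iSup₂_le_iff, EReal.coe_le_coe_iff]

theorem IsMaxMonotoneOp.apply_le_fitz (hB : IsMaxMonotoneOp B) (p : X × (X →L[ℝ] ℝ)) :
    (p.2 p.1 : EReal) ≤ fitz B p := by
  by_cases hp : p ∈ B
  · exact le_iSup₂_of_le p hp (by simp)
  · have hrel := mt hB.mem_of_monotonicallyRelated hp
    unfold MonotonicallyRelated at hrel
    push Not at hrel
    obtain ⟨q, hq, hlt⟩ := hrel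
    refine le_iSup₂_of_le q hq (EReal.coe_le_coe_iff.2 ?_)
    simp only [sub_apply, map_sub] at hlt
    linarith

theorem IsMonotoneOp.fitz_sum_le (hB : IsMonotoneOp B) {ι : Type*} {s : Finset ι}
    {p : ι → X × (X →L[ℝ] ℝ)} (hp : ∀ i ∈ s, p i ∈ B) {w : ι → ℝ} (hw₀ : ∀ i ∈ s, 0 ≤ w i)
    (hw₁ : ∑ i ∈ s, w i = 1) :
    fitz B (∑ i ∈ s, w i • (p i).1, ∑ i ∈ s, w i • (p i).2) ≤
      ((∑ i ∈ s, w i * (p i).2 (p i).1 : ℝ) : EReal) := by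
  refine fitz_le_coe_iff.2 fun q hq => ?_
  have := Finset.sum_nonneg fun i hi => mul_nonneg (hw₀ i hi) (hB _ (hp i hi) q hq)
  simp only [sub_apply, map_sub, mul_sub, Finset.sum_sub_distrib, ← Finset.sum_mul, hw₁,
    one_mul] at this
  simp only [map_sum, map_smul, smul_eq_mul, sum_apply, smul_apply] at this ⊢
  linarith

theorem IsMaxMonotoneOp.closure_inter_subset_opDom (hB : IsMaxMonotoneOp B) {S : Set X} {C : ℝ}
    (hC : ∀ p ∈ B, p.1 ∈ S → ‖p.2‖ ≤ C) : closure (opDom B ∩ S) ⊆ opDom B := by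
  intro y hy
  set ι := ↥(opDom B ∩ S)
  set l : Filter ι := Filter.comap Subtype.val (𝓝 y)
  have : l.NeBot := mem_closure_iff_comap_neBot.1 hy
  choose xs hxs using fun i : ι => i.2.1
  set ξ : ι → WeakDual ℝ X := fun i => StrongDual.toWeakDual (xs i)
  obtain ⟨b, -, hb⟩ := (WeakDual.isCompact_closedBall (0 : X →L[ℝ] ℝ) C).ultrafilter_le_nhds
    ((Ultrafilter.of l).map ξ) (by
      rw [Ultrafilter.coe_map, Filter.le_principal_iff, Filter.mem_map]
      exact Filter.Eventually.of_forall fun i =>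
        show xs i ∈ Metric.closedBall 0 C by simpa using hC _ (hxs i) i.2.2)
  have hl : (Ultrafilter.of l : Filter ι) ≤ l := Ultrafilter.of_le l
  refine ⟨WeakDual.toStrongDual b, hB.mem_of_monotonicallyRelated fun q hq => ?_⟩
  have hx : Tendsto (fun i : ι => (i : X)) l (𝓝 y) := tendsto_comap
  have hlim : Tendsto (fun i => (xs i - q.2) (i - q.1)) (Ultrafilter.of l)
      (𝓝 ((WeakDual.toStrongDual b - q.2) (y - q.1))) := by
    have hξ : Tendsto (fun i => ξ i (y - q.1)) (Ultrafilter.of l) (𝓝 (b (y - q.1))) :=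
      ((WeakDual.eval_continuous (y - q.1)).tendsto b).comp hb
    have hbdd : ∀ i : ι, ‖(xs i - q.2) (y - i)‖ ≤ (C + ‖q.2‖) * ‖y - i‖ := fun i =>
      ((xs i - q.2).le_opNorm _).trans <| mul_le_mul_of_nonneg_right
        ((norm_sub_le _ _).trans (by linarith [hC _ (hxs i) i.2.2])) (norm_nonneg _)
    have hsmall : Tendsto (fun i : ι => (xs i - q.2) (y - i)) (Ultrafilter.of l) (𝓝 0) := by
      refine (squeeze_zero_norm hbdd ?_).mono_left hl
      simpa using ((tendsto_const_nhds.sub hx).norm.const_mul (C + ‖q.2‖) :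
        Tendsto (fun i : ι => (C + ‖q.2‖) * ‖y - i‖) l (𝓝 ((C + ‖q.2‖) * ‖y - y‖)))
    convert (hξ.sub_const (q.2 (y - q.1))).sub hsmall using 1
    · ext i
      simp only [ξ, StrongDual.toWeakDual_apply, sub_apply, map_sub]
      ring
    · simp [sub_apply]
  exact ge_of_tendsto' hlim fun i => hB.1 _ (hxs i) q hq

theorem IsMonotoneOp.exists_forall_inv_mul_apply_le (hB : IsMonotoneOp B) {x₀ : X} {ε : ℝ}
    (hε : 0 < ε) (hball : closedBall x₀ ε ⊆ opDom B) (h : X) :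
    ∃ M, ∀ p ∈ B, p.1 ∈ closedBall x₀ ε → (1 + ‖p.2‖ * ‖p.1 - x₀‖)⁻¹ * p.2 h ≤ M := by
  set t := ε / (‖h‖ + 1)
  have ht : 0 < t := by positivity
  have hth : x₀ + t • h ∈ closedBall x₀ ε := by
    rw [mem_closedBall, dist_eq_norm, add_sub_cancel_left, norm_smul, Real.norm_of_nonneg ht.le,
      div_mul_eq_mul_div, div_le_iff₀ (by positivity)]
    nlinarith [norm_nonneg h]
  obtain ⟨ys, hys⟩ := hball hth
  refine ⟨(‖ys‖ * (2 * ε) + 1) / t, fun p hp hpε => ?_⟩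
  rw [mem_closedBall, dist_eq_norm] at hpε hth
  have h₁ : p.2 (x₀ + t • h - p.1) ≤ ‖ys‖ * (2 * ε) := by
    refine (hB.apply_sub_le hys hp).trans ((le_abs_self _).trans ((ys.le_opNorm _).trans ?_))
    refine mul_le_mul_of_nonneg_left ?_ (norm_nonneg _)
    calc ‖x₀ + t • h - p.1‖ = ‖(x₀ + t • h - x₀) - (p.1 - x₀)‖ := by congr 1; abel
      _ ≤ 2 * ε := (norm_sub_le _ _).trans (by linarith)
  have h₂ : p.2 (p.1 - x₀) ≤ ‖p.2‖ * ‖p.1 - x₀‖ := (le_abs_self _).trans (p.2.le_opNorm _)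
  have h₃ : t * p.2 h = p.2 (x₀ + t • h - p.1) + p.2 (p.1 - x₀) := by
    rw [← map_add, ← smul_eq_mul, ← map_smul]; congr 1; abel
  have hn : 0 ≤ ‖p.2‖ * ‖p.1 - x₀‖ := by positivity
  rw [le_div_iff₀ ht, inv_mul_eq_div, div_mul_eq_mul_div, div_le_iff₀ (by positivity)]
  nlinarith [mul_nonneg (by positivity : 0 ≤ ‖ys‖ * (2 * ε)) hn]

theorem IsMonotoneOp.exists_closedBall_bound [CompleteSpace X] (hB : IsMonotoneOp B) {x₀ : X}
    (hx₀ : x₀ ∈ interior (opDom B)) :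
    ∃ σ > 0, ∃ C ≥ 0, closedBall x₀ σ ⊆ opDom B ∧
      ∀ p ∈ B, p.1 ∈ closedBall x₀ σ → ‖p.2‖ ≤ C := by
  obtain ⟨ε, hε, hball⟩ := nhds_basis_closedBall.mem_iff.1 (mem_interior_iff_mem_nhds.1 hx₀)
  set ι := {p // p ∈ B ∧ p.1 ∈ closedBall x₀ ε}
  -- damped so as to be pointwise bounded; Banach–Steinhaus then bounds it uniformly
  set g : ι → X →L[ℝ] ℝ := fun p => (1 + ‖p.1.2‖ * ‖p.1.1 - x₀‖)⁻¹ • p.1.2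
  have hg : ∀ h, ∃ M, ∀ p : ι, g p h ≤ M := fun h => by
    obtain ⟨M, hM⟩ := hB.exists_forall_inv_mul_apply_le hε hball h
    exact ⟨M, fun p => hM _ p.2.1 p.2.2⟩
  obtain ⟨K, hK⟩ := banach_steinhaus (g := g) fun h => by
    obtain ⟨M₁, h₁⟩ := hg h
    obtain ⟨M₂, h₂⟩ := hg (-h)
    refine ⟨max M₁ M₂, fun p => (Real.norm_eq_abs _).trans_le
      (abs_le.2 ⟨?_, (h₁ p).trans (le_max_left _ _)⟩)⟩
    have := h₂ p
    rw [map_neg] at this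
    linarith [le_max_right M₁ M₂]
  refine ⟨min ε (2 * (|K| + 1))⁻¹, by positivity, 2 * |K|, by positivity,
    (closedBall_subset_closedBall (min_le_left _ _)).trans hball, fun p hp hpσ => ?_⟩
  have hgp := hK ⟨p, hp, closedBall_subset_closedBall (min_le_left _ _) hpσ⟩
  rw [mem_closedBall, dist_eq_norm] at hpσ
  have hα := mul_le_mul_of_nonneg_right (hpσ.trans (min_le_right _ _))
    (by positivity : (0 : ℝ) ≤ 2 * (|K| + 1))
  rw [inv_mul_cancel₀ (by positivity)] at hα
  simp only [g, norm_smul, norm_inv, Real.norm_eq_abs] at hgp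
  rw [abs_of_pos (by positivity), inv_mul_le_iff₀ (by positivity)] at hgp
  have h₁ : K * (‖p.2‖ * ‖p.1 - x₀‖) ≤ |K| * (‖p.2‖ * ‖p.1 - x₀‖) :=
    mul_le_mul_of_nonneg_right (le_abs_self K) (by positivity)
  nlinarith [mul_le_mul_of_nonneg_left hα (norm_nonneg p.2), abs_nonneg K,
    mul_nonneg (norm_nonneg p.2) (norm_nonneg (p.1 - x₀)), le_abs_self K]

theorem IsMonotoneOp.mul_norm_le (hB : IsMonotoneOp B) {x₀ : X} {σ C : ℝ} (hσ : 0 ≤ σ)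
    (hball : closedBall x₀ σ ⊆ opDom B) (hC : ∀ p ∈ B, p.1 ∈ closedBall x₀ σ → ‖p.2‖ ≤ C)
    {p : X × (X →L[ℝ] ℝ)} (hp : p ∈ B) :
    σ * ‖p.2‖ ≤ p.2 (p.1 - x₀) + C * (‖p.1 - x₀‖ + σ) := by
  rw [← Real.norm_of_nonneg hσ, ← norm_smul, Real.norm_of_nonneg hσ]
  refine ContinuousLinearMap.norm_le_of_forall_apply_le fun v hv => ?_
  have hv' : x₀ + σ • v ∈ closedBall x₀ σ := by
    rw [mem_closedBall, dist_eq_norm, add_sub_cancel_left, norm_smul, Real.norm_of_nonneg hσ]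
    exact mul_le_of_le_one_right hσ hv
  obtain ⟨cs, hcs⟩ := hball hv'
  have hmono := hB.apply_sub_le hp hcs
  have hcs_le : -cs (p.1 - (x₀ + σ • v)) ≤ C * (‖p.1 - x₀‖ + σ) := by
    refine (neg_le_abs _).trans ((cs.le_opNorm _).trans (mul_le_mul (hC _ hcs hv') ?_
      (norm_nonneg _) ((norm_nonneg _).trans (hC _ hcs hv'))))
    calc ‖p.1 - (x₀ + σ • v)‖ = ‖(p.1 - x₀) - σ • v‖ := by rw [sub_add_eq_sub_sub]
      _ ≤ ‖p.1 - x₀‖ + σ := by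
        refine (norm_sub_le _ _).trans ?_
        rw [norm_smul, Real.norm_of_nonneg hσ]
        gcongr
        exact mul_le_of_le_one_right hσ hv
  simp only [smul_apply, smul_eq_mul, sub_add_eq_sub_sub, map_sub, map_smul] at hmono hcs_le ⊢
  linarith

theorem mul_norm_le_of_fitz_le {c w : X} {ws : X →L[ℝ] ℝ} {σ C θ : ℝ} (hσ : 0 ≤ σ)
    (hball : closedBall c σ ⊆ opDom B) (hC : ∀ p ∈ B, p.1 ∈ closedBall c σ → ‖p.2‖ ≤ C)
    (hw : (w, ws) ∈ B) (hθ₀ : 0 ≤ θ) (hθ₁ : θ ≤ 1) {x : X} {xs : X →L[ℝ] ℝ} {S : ℝ}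
    (hS : fitz B (x, xs) ≤ S) :
    (1 - θ) * σ * ‖xs‖ ≤ (C + ‖ws‖) * (‖c + θ • (w - c) - x‖ + ‖w - c‖ + σ) -
      (xs (c + θ • (w - c)) - S) := by
  have hc : c ∈ closedBall c σ := mem_closedBall_self hσ
  have hC₀ : 0 ≤ C := by
    obtain ⟨cs, hcs⟩ := hball hc
    exact (norm_nonneg _).trans (hC _ hcs hc)
  have hθ₁' : 0 ≤ 1 - θ := sub_nonneg.2 hθ₁
  set y := c + θ • (w - c)
  have hθW : ‖θ • (w - c)‖ ≤ ‖w - c‖ := by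
    rw [norm_smul, Real.norm_of_nonneg hθ₀]; exact mul_le_of_le_one_left (norm_nonneg _) hθ₁
  have hθW' : ‖(1 - θ) • (w - c)‖ ≤ ‖w - c‖ := by
    rw [norm_smul, Real.norm_of_nonneg hθ₁']
    exact mul_le_of_le_one_left (norm_nonneg _) (by linarith)
  rw [← Real.norm_of_nonneg (mul_nonneg hθ₁' hσ), ← norm_smul]
  refine ContinuousLinearMap.norm_le_of_forall_apply_le fun v hv => ?_
  have hσv : ‖σ • v‖ ≤ σ := by
    rw [norm_smul, Real.norm_of_nonneg hσ]; exact mul_le_of_le_one_right hσ hv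
  have hv' : c + σ • v ∈ closedBall c σ := by
    rwa [mem_closedBall, dist_eq_norm, add_sub_cancel_left]
  obtain ⟨cs, hcs⟩ := hball hv'
  -- test `F_B (x, xs) ≤ S` at `(c + σ v, cs)` and `(w, ws)`, weighted by `1 - θ` and `θ`
  have e₁ := fitz_le_coe_iff.1 hS _ hcs
  have e₂ := fitz_le_coe_iff.1 hS _ hw
  have hcs_le : cs (c + σ • v) - cs x ≤ C * (‖y - x‖ + ‖w - c‖ + σ) := by
    rw [← map_sub, show c + σ • v - x = (y - x) - θ • (w - c) + σ • v by simp only [y]; abel]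
    refine (le_abs_self _).trans ((cs.le_opNorm _).trans (mul_le_mul (hC _ hcs hv') ?_
      (norm_nonneg _) hC₀))
    linarith [norm_add_le_of_le (norm_sub_le_of_le (le_refl ‖y - x‖) hθW) hσv]
  have hws_le : ws w - ws x ≤ ‖ws‖ * (‖y - x‖ + ‖w - c‖) := by
    rw [← map_sub, show w - x = (1 - θ) • (w - c) + (y - x) by simp only [y]; module]
    refine (le_abs_self _).trans ((ws.le_opNorm _).trans (mul_le_mul_of_nonneg_left ?_
      (norm_nonneg _)))
    linarith [norm_add_le_of_le hθW' (le_refl ‖y - x‖)]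
  have hxs : xs y = xs c + θ * (xs w - xs c) := by simp [y, map_sub]
  have hxsv : xs (c + σ • v) = xs c + σ * xs v := by simp
  dsimp only at e₁ e₂
  rw [hxsv] at e₁
  simp only [smul_apply, smul_eq_mul, hxs]
  nlinarith [mul_le_mul_of_nonneg_left e₁ hθ₁', mul_le_mul_of_nonneg_left e₂ hθ₀,
    mul_le_mul_of_nonneg_left hcs_le hθ₁', mul_le_mul_of_nonneg_left hws_le hθ₀,
    mul_nonneg hθ₀ (mul_nonneg hC₀ (by positivity : 0 ≤ ‖y - x‖ + ‖w - c‖ + σ)),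
    mul_nonneg hθ₁' (mul_nonneg (norm_nonneg ws) (by positivity : 0 ≤ ‖y - x‖ + ‖w - c‖)),
    mul_nonneg (norm_nonneg ws) hσ]

theorem le_mul_of_le_mul_of_mul_le_sub {A n r a L M : ℝ} (ha : 0 < a) (hr : 0 ≤ r) (hL : 0 ≤ L)
    (hM : 0 ≤ M) (hA : A ≤ n * r) (hn : a * n ≤ L * (r + M) - A) : A ≤ L * (M / a + 1) * r := by
  have h₁ : A * (a + r) ≤ L * r * (r + M) := by
    nlinarith [mul_le_mul_of_nonneg_left hA ha.le, mul_le_mul_of_nonneg_right hn hr]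
  have h₂ : r + M ≤ (M / a + 1) * (a + r) := by
    have : M / a * a = M := div_mul_cancel₀ M ha.ne'
    nlinarith [div_nonneg hM ha.le]
  refine le_of_mul_le_mul_right (h₁.trans ?_) (by linarith : 0 < a + r)
  calc L * r * (r + M) ≤ L * r * ((M / a + 1) * (a + r)) := by gcongr
    _ = L * (M / a + 1) * r * (a + r) := by ring

theorem IsMaxMonotoneOp.exists_apply_sub_le_of_fitz_le (hB : IsMaxMonotoneOp B) {c w : X}
    {ws : X →L[ℝ] ℝ} {σ C θ : ℝ} (hσ : 0 < σ) (hball : closedBall c σ ⊆ opDom B)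
    (hC : ∀ p ∈ B, p.1 ∈ closedBall c σ → ‖p.2‖ ≤ C) (hw : (w, ws) ∈ B) (hθ₀ : 0 ≤ θ)
    (hθ₁ : θ < 1) :
    ∃ ρ ≥ 0, ∀ (x : X) (xs : X →L[ℝ] ℝ) (S : ℝ), fitz B (x, xs) ≤ S →
      xs (c + θ • (w - c)) - S ≤ ρ * ‖c + θ • (w - c) - x‖ := by
  have hc : c ∈ closedBall c σ := mem_closedBall_self hσ.le
  have hL : 0 ≤ C + ‖ws‖ := by
    obtain ⟨cs, hcs⟩ := hball hc
    exact add_nonneg ((norm_nonneg _).trans (hC _ hcs hc)) (norm_nonneg _)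
  have ha : 0 < (1 - θ) * σ := mul_pos (by linarith) hσ
  refine ⟨(C + ‖ws‖) * ((‖w - c‖ + σ) / ((1 - θ) * σ) + 1), by positivity, fun x xs S hS => ?_⟩
  have hxS : xs x ≤ S := EReal.coe_le_coe_iff.1 ((hB.apply_le_fitz (x, xs)).trans hS)
  have hA : xs (c + θ • (w - c)) - S ≤ ‖xs‖ * ‖c + θ • (w - c) - x‖ :=
    calc xs (c + θ • (w - c)) - S ≤ xs (c + θ • (w - c) - x) := by rw [map_sub]; linarith
      _ ≤ ‖xs‖ * ‖c + θ • (w - c) - x‖ := (le_abs_self _).trans (xs.le_opNorm _)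
  have hT := mul_norm_le_of_fitz_le hσ.le hball hC hw hθ₀ hθ₁.le hS
  exact le_mul_of_le_mul_of_mul_le_sub ha (norm_nonneg _) hL (by positivity) hA
    (by linarith)

theorem IsMaxMonotoneOp.add_smul_sub_mem_opDom (hB : IsMaxMonotoneOp B) {c w : X} {σ C θ : ℝ}
    (hσ : 0 < σ) (hball : closedBall c σ ⊆ opDom B)
    (hC : ∀ p ∈ B, p.1 ∈ closedBall c σ → ‖p.2‖ ≤ C) (hw : w ∈ opDom B) (hθ₀ : 0 ≤ θ)
    (hθ₁ : θ < 1) : c + θ • (w - c) ∈ opDom B := by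
  obtain ⟨ws, hws⟩ := hw
  obtain ⟨ρ, hρ, hest⟩ := hB.exists_apply_sub_le_of_fitz_le hσ hball hC hws hθ₀ hθ₁
  set y := c + θ • (w - c)
  obtain ⟨η, -, hη⟩ := exists_norm_le_forall_le_apply_of_sum_le (ι := B) (fun q => y - q.1.1)
    (fun q => q.1.2 (y - q.1.1)) hρ fun s t ht₀ ht₁ => by
      have := hest _ _ _ (hB.1.fitz_sum_le (fun q _ => q.2) ht₀ ht₁)
      simp only [map_sub, mul_sub, Finset.sum_sub_distrib, sum_apply, smul_apply, smul_eq_mul,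
        smul_sub, ← Finset.sum_smul, ht₁, one_smul] at this ⊢
      simpa only [Finset.mul_sum, map_sum, map_smul, smul_eq_mul] using this
  exact ⟨η, hB.mem_of_monotonicallyRelated fun q hq => by simpa using hη ⟨q, hq⟩⟩

theorem IsMaxMonotoneOp.add_smul_sub_mem_interior_opDom [CompleteSpace X]
    (hB : IsMaxMonotoneOp B) {c w : X} (hc : c ∈ interior (opDom B)) (hw : w ∈ opDom B) {θ : ℝ}
    (hθ₀ : 0 ≤ θ) (hθ₁ : θ < 1) : c + θ • (w - c) ∈ interior (opDom B) := by
  have hmem : ∀ c' ∈ interior (opDom B), c' + θ • (w - c') ∈ opDom B := fun c' hc' => by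
    obtain ⟨σ, hσ, C, -, hball, hC⟩ := hB.1.exists_closedBall_bound hc'
    exact hB.add_smul_sub_mem_opDom hσ hball hC hw hθ₀ hθ₁
  have hθ : 1 - θ ≠ 0 := by linarith
  set g : X → X := fun x => (1 - θ)⁻¹ • (x - θ • w)
  have hg : ∀ x, g x + θ • (w - g x) = x := fun x => by
    simp only [g]
    match_scalars <;> field_simp <;> ring
  have hgc : g (c + θ • (w - c)) = c := by
    simp only [g]
    match_scalars <;> field_simp <;> ring
  have hlim := (by fun_prop : Continuous g).tendsto (c + θ • (w - c))
  rw [hgc] at hlim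
  rw [mem_interior_iff_mem_nhds]
  filter_upwards [hlim (isOpen_interior.mem_nhds hc)] with x hx
  simpa [hg] using hmem _ hx

theorem IsMaxMonotoneOp.convex_interior_opDom [CompleteSpace X] (hB : IsMaxMonotoneOp B) :
    Convex ℝ (interior (opDom B)) := by
  intro u hu v hv α β hα hβ hαβ
  obtain rfl : α = 1 - β := by linarith
  obtain hβ₁ | rfl := (show β ≤ 1 by linarith).lt_or_eq
  · rw [show (1 - β) • u + β • v = u + β • (v - u) by module]
    exact hB.add_smul_sub_mem_interior_opDom hu (interior_subset hv) hβ hβ₁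
  · simpa using hv

theorem IsMaxMonotoneOp.opDom_subset_closure_interior [CompleteSpace X] (hB : IsMaxMonotoneOp B)
    {x₀ : X} (hx₀ : x₀ ∈ interior (opDom B)) : opDom B ⊆ closure (interior (opDom B)) := by
  intro w hw
  have hlim : Tendsto (fun θ : ℝ => x₀ + θ • (w - x₀)) (𝓝[<] 1) (𝓝 w) := by
    have h := (by fun_prop : Continuous fun θ : ℝ => x₀ + θ • (w - x₀)).continuousWithinAt
      (s := Set.Iio 1) (x := 1)
    simpa using h.tendsto
  refine mem_closure_of_tendsto hlim ?_
  filter_upwards [Ioo_mem_nhdsLT zero_lt_one] with θ hθ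
  exact hB.add_smul_sub_mem_interior_opDom hx₀ hw hθ.1.le hθ.2

theorem IsMaxMonotoneOp.exists_forall_opDom_le [CompleteSpace X] (hB : IsMaxMonotoneOp B)
    {x₀ x : X} (hx₀ : x₀ ∈ interior (opDom B)) (hx : x ∉ interior (opDom B)) :
    ∃ f : X →L[ℝ] ℝ, (∀ u ∈ opDom B, f u ≤ f x) ∧ f x₀ < f x := by
  obtain ⟨f, hf⟩ := geometric_hahn_banach_open_point hB.convex_interior_opDom isOpen_interior hx
  refine ⟨f, fun u hu => ?_, hf x₀ hx₀⟩
  exact closure_minimal (fun v hv => (hf v hv).le) (isClosed_le f.continuous continuous_const)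
    (hB.opDom_subset_closure_interior hx₀ hu)

theorem IsMaxMonotoneOp.add_smul_mem (hB : IsMaxMonotoneOp B) {x : X} {xs f : X →L[ℝ] ℝ}
    (hx : (x, xs) ∈ B) (hf : ∀ u ∈ opDom B, f u ≤ f x) {t : ℝ} (ht : 0 ≤ t) :
    (x, xs + t • f) ∈ B := by
  refine hB.mem_of_monotonicallyRelated fun q hq => ?_
  have h₁ := hB.1 _ hx q hq
  have h₂ : f q.1 ≤ f x := hf q.1 ⟨q.2, hq⟩
  simp only [sub_apply, add_apply, smul_apply, smul_eq_mul, map_sub] at h₁ ⊢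
  nlinarith

theorem IsMaxMonotoneOp.exists_mem_openSegment_notMem_interior (hB : IsMaxMonotoneOp B)
    {x₀ z : X} {C : ℝ} (hx₀ : x₀ ∈ interior (opDom B)) (hz : z ∉ opDom B)
    (hC : ∀ p ∈ B, p.1 ∈ openSegment ℝ x₀ z → ‖p.2‖ ≤ C) :
    ∃ x ∈ openSegment ℝ x₀ z, x ∈ opDom B ∧ x ∉ interior (opDom B) := by
  set y : ℝ → X := fun t => x₀ + t • (z - x₀)
  have hy : Continuous y := by fun_prop
  have hyseg : ∀ t ∈ Ioo (0 : ℝ) 1, y t ∈ openSegment ℝ x₀ z := fun t ht => by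
    rw [openSegment_eq_image']; exact ⟨t, ht, rfl⟩
  have hint : ∀ t, y t ∈ interior (opDom B) → ∀ᶠ s in 𝓝[>] t, y s ∈ interior (opDom B) :=
    fun t ht => ((hy.tendsto t).mono_left nhdsWithin_le_nhds).eventually
      (isOpen_interior.mem_nhds ht)
  set T := {t ∈ Ioo (0 : ℝ) 1 | y t ∈ opDom B}
  have hTb : BddAbove T := ⟨1, fun t ht => ht.1.2.le⟩
  obtain ⟨t₁, ht₁⟩ : T.Nonempty := by
    obtain ⟨t, ht, htI⟩ := ((hint 0 (by simpa [y] using hx₀)).and (Ioo_mem_nhdsGT one_pos)).exists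
    exact ⟨t, htI, interior_subset ht⟩
  set tb := sSup T
  have htb₀ : 0 < tb := ht₁.1.1.trans_le (le_csSup hTb ht₁)
  have hytb : y tb ∈ opDom B := hB.closure_inter_subset_opDom hC <|
    map_mem_closure hy (csSup_mem_closure ⟨t₁, ht₁⟩ hTb) fun t ht => ⟨ht.2, hyseg t ht.1⟩
  have htb₁ : tb < 1 := (csSup_le ⟨t₁, ht₁⟩ fun t ht => ht.1.2.le).lt_of_ne fun h =>
    hz (by convert hytb using 1; simp [y, tb, h])
  refine ⟨y tb, hyseg tb ⟨htb₀, htb₁⟩, hytb, fun htb => ?_⟩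
  obtain ⟨t, ht, htI⟩ := ((hint tb htb).and (Ioo_mem_nhdsGT htb₁)).exists
  exact (le_csSup hTb ⟨⟨htb₀.trans htI.1, htI.2⟩, interior_subset ht⟩).not_gt htI.1

theorem IsMaxMonotoneOp.mem_opDom_of_bddOn_openSegment [CompleteSpace X] (hB : IsMaxMonotoneOp B)
    {x₀ z : X} {C : ℝ} (hx₀ : x₀ ∈ interior (opDom B))
    (hC : ∀ p ∈ B, p.1 ∈ openSegment ℝ x₀ z → ‖p.2‖ ≤ C) : z ∈ opDom B := by
  by_contra hz
  obtain ⟨x, hx, ⟨xs, hxs⟩, hxint⟩ := hB.exists_mem_openSegment_notMem_interior hx₀ hz hC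
  obtain ⟨f, hf, hfx₀⟩ := hB.exists_forall_opDom_le hx₀ hxint
  have hd : 0 < f (x - x₀) := by rw [map_sub]; linarith
  obtain ⟨n, hn⟩ := exists_nat_gt ((C * ‖x - x₀‖ - xs (x - x₀)) / f (x - x₀))
  have hbdd := hC _ (hB.add_smul_mem hxs hf n.cast_nonneg) hx
  have := (le_abs_self _).trans (((xs + (n : ℝ) • f).le_opNorm (x - x₀)).trans
    (mul_le_mul_of_nonneg_right hbdd (norm_nonneg _)))
  rw [add_apply, smul_apply, smul_eq_mul] at this
  rw [div_lt_iff₀ hd] at hn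
  linarith

end Monotone

theorem IsMonotoneOp.apply_sub_le_of_monotonicallyRelated_opSum
    {A B : Set (X × (X →L[ℝ] ℝ))} (hA : IsMonotoneOp A) {x₀ z x : X}
    {a₀s zs as bs : X →L[ℝ] ℝ} (ha₀ : (x₀, a₀s) ∈ A)
    (hrel : MonotonicallyRelated (opSum A B) (z, zs)) (hx : x ∈ openSegment ℝ x₀ z)
    (ha : (x, as) ∈ A) (hb : (x, bs) ∈ B) : bs (x - x₀) ≤ (zs - a₀s) (x - x₀) := by
  rw [openSegment_eq_image'] at hx
  obtain ⟨t, ⟨ht₀, ht₁⟩, rfl⟩ := hx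
  have h₁ := hrel (x₀ + t • (z - x₀), as + bs) ⟨as, bs, ha, hb, rfl⟩
  have h₂ := hA _ ha _ ha₀
  rw [show z - (x₀ + t • (z - x₀)) = (1 - t) • (z - x₀) by module] at h₁
  simp only [add_sub_cancel_left, map_smul, smul_eq_mul, sub_apply, add_apply] at h₁ h₂ ⊢
  have h₁' := nonneg_of_mul_nonneg_right h₁ (by linarith)
  have h₂' := nonneg_of_mul_nonneg_right h₂ ht₀
  nlinarith

/-- a monotonically related point with `z ∈ dom A` lies in `dom B`. -/
theorem mem_domB_of_monotonically_related {X : Type*} [NormedAddCommGroup X] [NormedSpace ℝ X]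
    [CompleteSpace X]
    (A B : Set (X × (X →L[ℝ] ℝ)))
    (hA : IsMonotoneOp A) (hB : IsMaxMonotoneOp B)
    (hstar : (starSet (opDom A) ∩ interior (opDom B)).Nonempty)
    (z : X) (zs : X →L[ℝ] ℝ)
    (hz : z ∈ opDom A)
    (hrel : MonotonicallyRelated (opSum A B) (z, zs)) :
    z ∈ opDom B := by
  obtain ⟨x₀, ⟨⟨a₀s, ha₀⟩, hseg⟩, hx₀⟩ := hstar
  obtain ⟨σ, hσ, C, hC₀, hball, hC⟩ := hB.1.exists_closedBall_bound hx₀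
  refine hB.mem_opDom_of_bddOn_openSegment hx₀
    (C := (‖zs - a₀s‖ * ‖z - x₀‖ + C * (‖z - x₀‖ + σ)) / σ) fun p hp hpx => ?_
  obtain ⟨as, has⟩ := hseg z hz (openSegment_subset_segment ℝ x₀ z hpx)
  have hdir := hA.apply_sub_le_of_monotonicallyRelated_opSum ha₀ hrel hpx has hp
  have hdist := norm_sub_le_of_mem_segment (openSegment_subset_segment ℝ x₀ z hpx)
  have hnorm := hB.1.mul_norm_le hσ.le hball hC hp
  have hzs := (le_abs_self _).trans ((zs - a₀s).le_opNorm (p.1 - x₀))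
  rw [le_div_iff₀ hσ]
  nlinarith [mul_le_mul_of_nonneg_left hdist (norm_nonneg (zs - a₀s)),
    mul_le_mul_of_nonneg_left hdist hC₀]
end
end

section
/- Let X be a real Banach space, let A : X ⇉ X* be monotone, and let B : X ⇉ X* be maximally monotone. Let (z, z*) ∈ X × X*, let x₀ ∈ dom A ∩ int(dom B), and suppose there exist λ ∈ [0, 1) and a sequence (aₙ, aₙ*) in gra A with aₙ ∈ dom B for all n, such that aₙ → x₀ + λ(z − x₀) in norm and ⟨z − aₙ, aₙ*⟩ → +∞. Then F_{A+B}(z, z*) = +∞. -/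
open Set Filter Topology

noncomputable section

variable {X : Type*} [NormedAddCommGroup X] [NormedSpace ℝ X]

/-! Along `(aₙ, aₙ* + bₙ*)` with `bₙ* ∈ B aₙ`, the expression defining `F_{A+B}(z, z*)` equals
`⟨z − aₙ, aₙ*⟩ + ⟨z − aₙ, bₙ*⟩ + ⟨aₙ, z*⟩`, so it suffices to bound `⟨z − aₙ, bₙ*⟩` from below.
Since `λ < 1`, the ray from `z` through `x₀ + λ(z − x₀)` passes through `x₀`, so for some `s > 0`
the points `yₙ = aₙ − s(z − aₙ)` eventually lie in `int(dom B)`, in a region where `B` is bounded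
by some `M`: a monotone operator on a Banach space is locally bounded at interior points of its
domain, by the uniform boundedness principle. Monotonicity of `B` between `(aₙ, bₙ*)` and
`(yₙ, wₙ*)` then gives `⟨z − aₙ, bₙ*⟩ ≥ ⟨z − aₙ, wₙ*⟩ ≥ −M‖z − aₙ‖`, which is bounded below. -/

theorem exists_norm_le_of_bddAbove_of_mem_nhds_zero [CompleteSpace X] {ι : Type*}
    (g : ι → X →L[ℝ] ℝ) {U : Set X} (hU : U ∈ 𝓝 0)
    (hg : ∀ v ∈ U, BddAbove (range fun i => g i v)) : ∃ C, ∀ i, ‖g i‖ ≤ C := by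
  refine banach_steinhaus fun u => ?_
  have hsmul : Tendsto (fun c : ℝ => c • u) (𝓝[>] 0) (𝓝 0) := by
    simpa using ((tendsto_id (x := 𝓝 (0 : ℝ))).smul_const u).mono_left nhdsWithin_le_nhds
  obtain ⟨c, ⟨hcU, hcU'⟩, hc⟩ := ((hsmul.eventually hU).and
    ((by simpa using hsmul.neg : Tendsto (fun c : ℝ => -(c • u)) _ _).eventually hU)
      |>.and self_mem_nhdsWithin).exists
  obtain ⟨C₁, hC₁⟩ := hg _ hcU
  obtain ⟨C₂, hC₂⟩ := hg _ hcU'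
  refine ⟨max C₁ C₂ / c, fun i => ?_⟩
  have hle : |c * g i u| ≤ max C₁ C₂ := by
    have h₁ : c * g i u ≤ C₁ := by simpa using hC₁ ⟨i, rfl⟩
    have h₂ : -(c * g i u) ≤ C₂ := by simpa using hC₂ ⟨i, rfl⟩
    exact abs_le.2 ⟨by linarith [le_max_right C₁ C₂], h₁.trans (le_max_left _ _)⟩
  rw [abs_mul, abs_of_pos hc] at hle
  rw [Real.norm_eq_abs, le_div_iff₀ hc]
  linarith

namespace IsMonotoneOp

variable {B : Set (X × (X →L[ℝ] ℝ))}

theorem apply_sub_le_s11 (hB : IsMonotoneOp B) {p q : X × (X →L[ℝ] ℝ)} (hp : p ∈ B) (hq : q ∈ B)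
    (x₀ : X) : q.2 (p.1 - x₀) ≤ ‖p.2‖ * ‖p.1 - q.1‖ + ‖q.2‖ * ‖q.1 - x₀‖ := by
  have hmono : q.2 (p.1 - q.1) ≤ p.2 (p.1 - q.1) := by
    simpa [sub_nonneg] using hB p hp q hq
  have hsplit : q.2 (p.1 - x₀) = q.2 (p.1 - q.1) + q.2 (q.1 - x₀) := by
    rw [← map_add, sub_add_sub_cancel]
  rw [hsplit]
  gcongr
  · exact hmono.trans ((Real.le_norm_self _).trans (p.2.le_opNorm _))
  · exact (Real.le_norm_self _).trans (q.2.le_opNorm _)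

/-- The normalisation `1 + d + ‖x*‖ d`, with `d = ‖x - x₀‖`, is chosen so that the rescaled
functionals `x* / (1 + d + ‖x*‖ d)` are bounded above on a neighbourhood of `0`, by monotonicity;
the uniform boundedness principle then bounds their norms. -/
theorem exists_norm_le_mul [CompleteSpace X] (hB : IsMonotoneOp B) {x₀ : X}
    (hx₀ : x₀ ∈ interior (opDom B)) :
    ∃ C, ∀ p ∈ B, ‖p.2‖ ≤ C * (1 + ‖p.1 - x₀‖ + ‖p.2‖ * ‖p.1 - x₀‖) := by
  set t : X × (X →L[ℝ] ℝ) → ℝ := fun p => 1 + ‖p.1 - x₀‖ + ‖p.2‖ * ‖p.1 - x₀‖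
  have ht : ∀ p, 0 < t p := fun p => by positivity
  have hU : {v | x₀ + v ∈ opDom B} ∈ 𝓝 (0 : X) :=
    (continuous_const_add x₀).continuousAt.preimage_mem_nhds
      (by simpa [mem_interior_iff_mem_nhds] using hx₀)
  have hbdd : ∀ v ∈ {v | x₀ + v ∈ opDom B},
      BddAbove (range fun p : B => ((t p)⁻¹ • (p : X × (X →L[ℝ] ℝ)).2) v) := by
    rintro v ⟨xs, hv⟩
    refine ⟨‖xs‖ * (‖v‖ + 1) + 1, ?_⟩
    rintro _ ⟨⟨q, hq⟩, rfl⟩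
    have hq_le := hB.apply_sub_le_s11 hv hq x₀
    have hdist : ‖x₀ + v - q.1‖ ≤ ‖v‖ + ‖q.1 - x₀‖ := by
      calc ‖x₀ + v - q.1‖ = ‖v - (q.1 - x₀)‖ := by congr 1; abel
        _ ≤ ‖v‖ + ‖q.1 - x₀‖ := norm_sub_le _ _
    simp only [add_sub_cancel_left] at hq_le
    show (t q)⁻¹ * q.2 v ≤ _
    rw [inv_mul_le_iff₀ (ht q)]
    have hxs := norm_nonneg xs
    have hvn := norm_nonneg v
    have hN := norm_nonneg q.2
    have hd := norm_nonneg (q.1 - x₀)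
    calc q.2 v ≤ ‖xs‖ * (‖v‖ + ‖q.1 - x₀‖) + ‖q.2‖ * ‖q.1 - x₀‖ :=
        hq_le.trans (by gcongr)
      _ ≤ t q * (‖xs‖ * (‖v‖ + 1) + 1) := by
        simp only [t]
        nlinarith [mul_nonneg (mul_nonneg hd hxs) hvn,
          mul_nonneg (mul_nonneg hN hd) (mul_nonneg hxs (add_nonneg hvn zero_le_one))]
  obtain ⟨C, hC⟩ := exists_norm_le_of_bddAbove_of_mem_nhds_zero _ hU hbdd
  refine ⟨C, fun p hp => ?_⟩
  have hCp := hC ⟨p, hp⟩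
  rwa [norm_smul, norm_inv, Real.norm_of_nonneg (ht p).le, inv_mul_le_iff₀ (ht p),
    mul_comm] at hCp

theorem exists_mem_nhds_norm_le [CompleteSpace X] (hB : IsMonotoneOp B) {x₀ : X}
    (hx₀ : x₀ ∈ interior (opDom B)) :
    ∃ U ∈ 𝓝 x₀, ∃ M, ∀ p ∈ B, p.1 ∈ U → ‖p.2‖ ≤ M := by
  obtain ⟨C, hC⟩ := hB.exists_norm_le_mul hx₀
  set δ := (2 * (|C| + 1))⁻¹
  refine ⟨Metric.ball x₀ δ, Metric.ball_mem_nhds _ (by positivity), 3 * |C|, fun p hp hpx => ?_⟩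
  rw [Metric.mem_ball, dist_eq_norm] at hpx
  have hCδ : |C| * ‖p.1 - x₀‖ ≤ 1 / 2 := by
    calc |C| * ‖p.1 - x₀‖ ≤ (|C| + 1) * δ := by gcongr; linarith [abs_nonneg C]
      _ = 1 / 2 := by simp only [δ]; field_simp
  have hδ : ‖p.1 - x₀‖ ≤ 1 / 2 := by
    calc ‖p.1 - x₀‖ ≤ δ := hpx.le
      _ ≤ 1 / 2 := inv_le_of_inv_le₀ (by norm_num) (by linarith [abs_nonneg C])
  have hp_le := (hC p hp).trans (mul_le_mul_of_nonneg_right (le_abs_self C) (by positivity))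
  nlinarith [mul_le_mul_of_nonneg_left hCδ (norm_nonneg p.2), abs_nonneg C]

theorem isBoundedUnder_ge_apply_sub [CompleteSpace X] (hB : IsMonotoneOp B) {z l : X} {s : ℝ}
    (hs : 0 < s) (hy : l - s • (z - l) ∈ interior (opDom B)) {a : ℕ → X}
    {b : ℕ → X →L[ℝ] ℝ} (ha : Tendsto a atTop (𝓝 l)) (hb : ∀ n, (a n, b n) ∈ B) :
    IsBoundedUnder (· ≥ ·) atTop fun n => b n (z - a n) := by
  obtain ⟨U, hU, M, hM⟩ := hB.exists_mem_nhds_norm_le hy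
  have hW : U ∩ opDom B ∈ 𝓝 (l - s • (z - l)) := inter_mem hU (mem_interior_iff_mem_nhds.1 hy)
  have hy_lim : Tendsto (fun n => a n - s • (z - a n)) atTop (𝓝 (l - s • (z - l))) :=
    ha.sub ((tendsto_const_nhds.sub ha).const_smul s)
  have hz_lim : Tendsto (fun n => ‖z - a n‖) atTop (𝓝 ‖z - l‖) :=
    (tendsto_const_nhds.sub ha).norm
  refine ⟨-(M * (‖z - l‖ + 1)), eventually_map.2 ?_⟩
  filter_upwards [hy_lim hW, hz_lim.eventually_le_const (lt_add_one _)]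
    with n ⟨hyU, w, hw⟩ hzn
  have hmono : w (z - a n) ≤ b n (z - a n) := by
    have h := hB _ (hb n) _ hw
    rw [sub_sub_cancel, map_smul, smul_eq_mul, mul_nonneg_iff_of_pos_left hs,
      sub_apply, sub_nonneg] at h
    exact h
  have hw_le : ‖w‖ ≤ M := hM _ hw hyU
  calc -(M * (‖z - l‖ + 1)) ≤ -(‖w‖ * ‖z - a n‖) :=
        neg_le_neg (mul_le_mul hw_le hzn (norm_nonneg _) ((norm_nonneg w).trans hw_le))
    _ ≤ w (z - a n) := neg_le_of_abs_le (w.le_opNorm _)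
    _ ≤ b n (z - a n) := hmono

end IsMonotoneOp

theorem exists_pos_sub_smul_mem_of_mem_nhds {x₀ z : X} {lam : ℝ} (hlam0 : 0 ≤ lam)
    (hlam1 : lam < 1) {W : Set X} (hW : W ∈ 𝓝 x₀) :
    ∃ s > (0 : ℝ), x₀ + lam • (z - x₀) - s • (z - (x₀ + lam • (z - x₀))) ∈ W := by
  set l := x₀ + lam • (z - x₀)
  have hzl : z - l = (1 - lam) • (z - x₀) := by simp only [l]; module
  have hs₀ : l - (lam / (1 - lam)) • (z - l) = x₀ := by
    rw [hzl, smul_smul, div_mul_cancel₀ _ (sub_pos.2 hlam1).ne', add_sub_cancel_right]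
  have hline : Tendsto (fun s : ℝ => l - s • (z - l)) (𝓝[>] (lam / (1 - lam))) (𝓝 x₀) := by
    rw [← hs₀]
    exact ((by fun_prop : Continuous fun s : ℝ => l - s • (z - l)).tendsto _).mono_left
      nhdsWithin_le_nhds
  obtain ⟨s, hsW, hs⟩ := ((hline.eventually hW).and self_mem_nhdsWithin).exists
  exact ⟨s, (div_nonneg hlam0 (sub_pos.2 hlam1).le).trans_lt hs, hsW⟩

theorem fitz_eq_top_of_tendsto {ι : Type*} {l : Filter ι} [l.NeBot]
    {S : Set (X × (X →L[ℝ] ℝ))} {p : X × (X →L[ℝ] ℝ)} {q : ι → X × (X →L[ℝ] ℝ)}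
    (hq : ∀ i, q i ∈ S)
    (h : Tendsto (fun i => (q i).2 p.1 + p.2 (q i).1 - (q i).2 (q i).1) l atTop) :
    fitz S p = ⊤ := by
  refine (EReal.eq_top_iff_forall_lt _).2 fun r => ?_
  obtain ⟨i, hi⟩ := (h.eventually_gt_atTop r).exists
  exact (EReal.coe_lt_coe_iff.2 hi).trans_le (le_iSup₂_of_le (q i) (hq i) le_rfl)

theorem fitz_sum_eq_top_of_unbounded_seq_general {X : Type*} [NormedAddCommGroup X] [NormedSpace ℝ X]
    [CompleteSpace X]
    (A B : Set (X × (X →L[ℝ] ℝ)))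
    (hB : IsMaxMonotoneOp B)
    (z : X) (zs : X →L[ℝ] ℝ) (x₀ : X)
    (hx₀ : x₀ ∈ opDom A ∩ interior (opDom B))
    (lam : ℝ) (hlam0 : 0 ≤ lam) (hlam1 : lam < 1)
    (a : ℕ → X) (as : ℕ → (X →L[ℝ] ℝ))
    (hgra : ∀ n, (a n, as n) ∈ A)
    (hdomB : ∀ n, a n ∈ opDom B)
    (hconv : Filter.Tendsto a Filter.atTop (nhds (x₀ + lam • (z - x₀))))
    (hdiv : Filter.Tendsto (fun n => (as n) (z - a n)) Filter.atTop Filter.atTop) :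
    fitz (opSum A B) (z, zs) = ⊤ := by
  obtain ⟨s, hs, hy⟩ := exists_pos_sub_smul_mem_of_mem_nhds (z := z) hlam0 hlam1
    (isOpen_interior.mem_nhds hx₀.2)
  choose b hb using hdomB
  obtain ⟨C, hC⟩ := isBoundedUnder_ge_add (hB.1.isBoundedUnder_ge_apply_sub hs hy hconv hb)
    ((zs.continuous.tendsto _).comp hconv).isBoundedUnder_ge
  refine fitz_eq_top_of_tendsto (l := atTop) (q := fun n => (a n, as n + b n))
    (fun n => ⟨as n, b n, hgra n, hb n, rfl⟩) ?_
  have hval : ∀ n, (as n + b n) z + zs (a n) - (as n + b n) (a n) =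
      (b n (z - a n) + zs (a n)) + as n (z - a n) := fun n => by
    simp only [add_apply, map_sub]; ring
  simpa only [hval, Pi.add_apply, Function.comp_apply] using
    tendsto_atTop_add_left_of_le' _ C (eventually_map.1 hC) hdiv

/-- an unbounded sequence along the graph of `A` in `dom B`
forces the Fitzpatrick function of the sum to be `+∞`. -/
theorem fitz_sum_eq_top_of_unbounded_seq {X : Type*} [NormedAddCommGroup X] [NormedSpace ℝ X]
    [CompleteSpace X]
    (A B : Set (X × (X →L[ℝ] ℝ)))
    (hA : IsMonotoneOp A) (hB : IsMaxMonotoneOp B)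
    (z : X) (zs : X →L[ℝ] ℝ) (x₀ : X)
    (hx₀ : x₀ ∈ opDom A ∩ interior (opDom B))
    (lam : ℝ) (hlam0 : 0 ≤ lam) (hlam1 : lam < 1)
    (a : ℕ → X) (as : ℕ → (X →L[ℝ] ℝ))
    (hgra : ∀ n, (a n, as n) ∈ A)
    (hdomB : ∀ n, a n ∈ opDom B)
    (hconv : Filter.Tendsto a Filter.atTop (nhds (x₀ + lam • (z - x₀))))
    (hdiv : Filter.Tendsto (fun n => (as n) (z - a n)) Filter.atTop Filter.atTop) :
    fitz (opSum A B) (z, zs) = ⊤ :=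
  fitz_sum_eq_top_of_unbounded_seq_general A B hB z zs x₀ hx₀ lam hlam0 hlam1 a as hgra hdomB hconv
    hdiv
end
end

section
/- Let X be a real Banach space and let A : X ⇉ X* be of type (FPV). Suppose x₀ ∈ dom A and z ∉ cl(dom A) (the norm closure of dom A). Then there exist λ ∈ [0, 1) and a sequence (aₙ, aₙ*) in gra A such that aₙ → x₀ + λ(z − x₀) in norm and ⟨z − aₙ, aₙ*⟩ → +∞. -/
open Set Filter Topology

noncomputable section

variable {X : Type*} [NormedAddCommGroup X] [NormedSpace ℝ X]

/-!
Suppose no such sequence exists. Then `(a, a*) ↦ ⟨z − a, a*⟩` is bounded above on `gra A` near every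
point `x₀ + λ(z − x₀)` with `λ < 1`, and trivially near `z`, which has a neighbourhood missing `dom A`.
By compactness of `[x₀, z]` it is bounded above by some `M` on `gra A` over a `δ`-thickening `U` of
`[x₀, z]`. Points of `dom A ∩ U` stay at distance `ρ > 0` from `z`, so for a norming functional `f`
of `z − x₀` and `δ ≤ ρ / 4` we get `f (z − a) ≥ ρ / 2` there. Hence `(z, (2|M|/ρ) f)` is monotonically
related to `gra A ∩ (U × X*)`, and (FPV) puts `z` in `dom A`, a contradiction.
-/

open Metric

theorem exists_seq_tendsto_atTop_of_not_bddAbove_nhds {α Y : Type*} [TopologicalSpace Y]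
    [FirstCountableTopology Y] {S : Set α} {π : α → Y} {f : α → ℝ} {y : Y}
    (h : ¬ ∃ U ∈ 𝓝 y, BddAbove (f '' (S ∩ π ⁻¹' U))) :
    ∃ u : ℕ → α, (∀ n, u n ∈ S) ∧ Tendsto (π ∘ u) atTop (𝓝 y) ∧
      Tendsto (f ∘ u) atTop atTop := by
  obtain ⟨V, hV⟩ := (𝓝 y).exists_antitone_basis
  have hlarge : ∀ n : ℕ, ∃ p ∈ S ∩ π ⁻¹' V n, (n : ℝ) < f p := fun n => by
    by_contra! hn
    exact h ⟨V n, hV.mem n, n, forall_mem_image.2 hn⟩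
  choose u hu hfu using hlarge
  exact ⟨u, fun n => (hu n).1, hV.tendsto fun n => (hu n).2,
    tendsto_atTop_mono (fun n => (hfu n).le) tendsto_natCast_atTop_atTop⟩

theorem IsCompact.exists_thickening_bddAbove {α Y : Type*} [PseudoMetricSpace Y] {K : Set Y}
    (hK : IsCompact K) {S : Set α} {π : α → Y} {f : α → ℝ}
    (h : ∀ y ∈ K, ∃ U ∈ 𝓝 y, BddAbove (f '' (S ∩ π ⁻¹' U))) :
    ∃ δ > 0, BddAbove (f '' (S ∩ π ⁻¹' thickening δ K)) := by
  refine hK.induction_on (p := fun T => ∃ δ > 0, BddAbove (f '' (S ∩ π ⁻¹' thickening δ T)))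
    ⟨1, one_pos, by simp⟩ ?_ ?_ ?_
  · rintro s t hst ⟨δ, hδ, hb⟩
    exact ⟨δ, hδ, hb.mono (image_mono (inter_subset_inter_right _
      (preimage_mono (thickening_subset_of_subset δ hst))))⟩
  · rintro s t ⟨δ₁, hδ₁, hb₁⟩ ⟨δ₂, hδ₂, hb₂⟩
    refine ⟨min δ₁ δ₂, lt_min hδ₁ hδ₂, ?_⟩
    rw [thickening_union, preimage_union, inter_union_distrib_left, image_union]
    exact (hb₁.mono (image_mono (inter_subset_inter_right _ (preimage_mono
      (thickening_mono (min_le_left _ _) _))))).union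
      (hb₂.mono (image_mono (inter_subset_inter_right _ (preimage_mono
        (thickening_mono (min_le_right _ _) _)))))
  · intro y hy
    obtain ⟨U, hU, hb⟩ := h y hy
    obtain ⟨ε, hε, hball⟩ := Metric.mem_nhds_iff.1 hU
    have hsub : thickening (ε / 2) (ball y (ε / 2)) ⊆ U := fun x hx => by
      obtain ⟨w, hw, hxw⟩ := mem_thickening_iff.1 hx
      exact hball (by linarith [dist_triangle x w y, mem_ball.1 hw] : dist x y < ε)
    exact ⟨ball y (ε / 2), mem_nhdsWithin_of_mem_nhds (ball_mem_nhds y (half_pos hε)),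
      ε / 2, half_pos hε, hb.mono (image_mono (inter_subset_inter_right _ (preimage_mono hsub)))⟩

/-- Since `f` attains its norm on `z − w` for every `w ∈ [x₀, z]`, it loses at most twice the
distance from the segment. -/
theorem norm_sub_le_apply_add_two_mul_dist {E : Type*} [SeminormedAddCommGroup E]
    [NormedSpace ℝ E] {f : E →L[ℝ] ℝ} (hf : ‖f‖ ≤ 1) {x₀ z w : E} (hfz : f (z - x₀) = ‖z - x₀‖)
    (hw : w ∈ segment ℝ x₀ z) (y : E) : ‖z - y‖ ≤ f (z - y) + 2 * dist y w := by
  rw [segment_eq_image'] at hw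
  obtain ⟨s, ⟨-, hs1⟩, rfl⟩ := hw
  have hzw : z - (x₀ + s • (z - x₀)) = (1 - s) • (z - x₀) := by module
  have hfzw : f (z - (x₀ + s • (z - x₀))) = ‖z - (x₀ + s • (z - x₀))‖ := by
    rw [hzw, map_smul, norm_smul, hfz, smul_eq_mul, Real.norm_of_nonneg (by linarith)]
  have hfyw : f (y - (x₀ + s • (z - x₀))) ≤ dist y (x₀ + s • (z - x₀)) := by
    rw [dist_eq_norm]
    exact (le_abs_self _).trans ((f.le_opNorm _).trans (mul_le_of_le_one_left (norm_nonneg _) hf))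
  calc ‖z - y‖ ≤ ‖z - (x₀ + s • (z - x₀))‖ + ‖(x₀ + s • (z - x₀)) - y‖ :=
        norm_sub_le_norm_sub_add_norm_sub _ _ _
    _ = f (z - y) + f (y - (x₀ + s • (z - x₀))) + dist y (x₀ + s • (z - x₀)) := by
        rw [← hfzw, ← map_add, dist_eq_norm', sub_add_sub_cancel]
    _ ≤ f (z - y) + 2 * dist y (x₀ + s • (z - x₀)) := by linarith

theorem IsFPV.mem_of_forall_apply_le {A : Set (X × (X →L[ℝ] ℝ))} (hA : IsFPV A) {U : Set X}
    (hUo : IsOpen U) (hUc : Convex ℝ U) (hUA : (U ∩ opDom A).Nonempty) {z : X} (hz : z ∈ U)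
    {zs : X →L[ℝ] ℝ} (hle : ∀ p ∈ A, p.1 ∈ U → p.2 (z - p.1) ≤ zs (z - p.1)) : (z, zs) ∈ A :=
  hA.2 U hUo hUc hUA z zs hz fun p ⟨hpA, hpU, _⟩ => by
    simpa only [sub_apply, sub_nonneg] using hle p hpA hpU

theorem IsFPV.mem_closure_opDom_of_bddAbove {A : Set (X × (X →L[ℝ] ℝ))} (hA : IsFPV A)
    {x₀ z : X} (hx₀ : x₀ ∈ opDom A) {δ : ℝ} (hδ : 0 < δ)
    (hbdd : BddAbove ((fun p : X × (X →L[ℝ] ℝ) => p.2 (z - p.1)) ''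
      (A ∩ Prod.fst ⁻¹' thickening δ (segment ℝ x₀ z)))) :
    z ∈ closure (opDom A) := by
  by_contra hz
  obtain ⟨ρ, hρ, hfar⟩ : ∃ ρ > 0, ∀ a ∈ opDom A, ρ ≤ dist z a := by
    simpa [Metric.mem_closure_iff] using hz
  obtain ⟨M, hM⟩ := hbdd
  obtain ⟨f, hf, hfz⟩ := exists_dual_vector'' ℝ (z - x₀)
  set η := min δ (ρ / 4)
  have hη : 0 < η := lt_min hδ (by positivity)
  set U := thickening η (segment ℝ x₀ z)
  have hf_large : ∀ a ∈ opDom A, a ∈ U → ρ / 2 ≤ f (z - a) := fun a ha haU => by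
    obtain ⟨w, hw, haw⟩ := mem_thickening_iff.1 haU
    have := norm_sub_le_apply_add_two_mul_dist hf hfz hw a
    linarith [hfar a ha, dist_eq_norm z a, min_le_right δ (ρ / 4)]
  have hzA : (z, (2 * |M| / ρ) • f) ∈ A := by
    refine hA.mem_of_forall_apply_le isOpen_thickening ((convex_segment x₀ z).thickening η)
      ⟨x₀, self_subset_thickening hη _ (left_mem_segment ℝ x₀ z), hx₀⟩
      (self_subset_thickening hη _ (right_mem_segment ℝ x₀ z)) fun p hp hpU => ?_
    have hpM : p.2 (z - p.1) ≤ M :=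
      hM ⟨p, ⟨hp, thickening_mono (min_le_left _ _) _ hpU⟩, rfl⟩
    calc p.2 (z - p.1) ≤ |M| := hpM.trans (le_abs_self M)
      _ = 2 * |M| / ρ * (ρ / 2) := by field_simp
      _ ≤ ((2 * |M| / ρ) • f) (z - p.1) :=
          mul_le_mul_of_nonneg_left (hf_large p.1 ⟨p.2, hp⟩ hpU) (by positivity)
  exact hz (subset_closure ⟨_, hzA⟩)

theorem exists_unbounded_seq_of_not_mem_closure_general {X : Type*} [NormedAddCommGroup X]
    [NormedSpace ℝ X]
    (A : Set (X × (X →L[ℝ] ℝ)))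
    (hFPV : IsFPV A)
    (x₀ : X) (hx₀ : x₀ ∈ opDom A)
    (z : X) (hz : z ∉ closure (opDom A)) :
    ∃ (lam : ℝ), 0 ≤ lam ∧ lam < 1 ∧
      ∃ (a : ℕ → X) (as : ℕ → (X →L[ℝ] ℝ)),
        (∀ n, (a n, as n) ∈ A) ∧
        Filter.Tendsto a Filter.atTop (nhds (x₀ + lam • (z - x₀))) ∧
        Filter.Tendsto (fun n => (as n) (z - a n)) Filter.atTop Filter.atTop := by
  by_contra! hcon
  have hloc : ∀ lam ∈ Icc (0 : ℝ) 1, ∃ U ∈ 𝓝 (x₀ + lam • (z - x₀)),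
      BddAbove ((fun p : X × (X →L[ℝ] ℝ) => p.2 (z - p.1)) '' (A ∩ Prod.fst ⁻¹' U)) := by
    rintro lam ⟨h0, h1⟩
    rcases h1.lt_or_eq with h1 | rfl
    · by_contra hy
      obtain ⟨u, huA, hu, htop⟩ := exists_seq_tendsto_atTop_of_not_bddAbove_nhds hy
      exact hcon lam h0 h1 (fun n => (u n).1) (fun n => (u n).2) huA hu htop
    · exact ⟨(closure (opDom A))ᶜ, isClosed_closure.isOpen_compl.mem_nhds (by simpa using hz),
        0, forall_mem_image.2 fun p ⟨hp, hpU⟩ => (hpU (subset_closure ⟨p.2, hp⟩)).elim⟩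
  have hK : IsCompact (segment ℝ x₀ z) := by
    rw [segment_eq_image']
    exact isCompact_Icc.image (by fun_prop)
  obtain ⟨δ, hδ, hbdd⟩ := hK.exists_thickening_bddAbove (by
    rw [segment_eq_image']
    exact forall_mem_image.2 hloc)
  exact hz (hFPV.mem_closure_opDom_of_bddAbove hx₀ hδ hbdd)

/-- for an (FPV) operator, a point outside `cl(dom A)` admits an
unbounded sequence along the graph. -/
theorem exists_unbounded_seq_of_not_mem_closure {X : Type*} [NormedAddCommGroup X]
    [NormedSpace ℝ X] [CompleteSpace X]
    (A : Set (X × (X →L[ℝ] ℝ)))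
    (hFPV : IsFPV A)
    (x₀ : X) (hx₀ : x₀ ∈ opDom A)
    (z : X) (hz : z ∉ closure (opDom A)) :
    ∃ (lam : ℝ), 0 ≤ lam ∧ lam < 1 ∧
      ∃ (a : ℕ → X) (as : ℕ → (X →L[ℝ] ℝ)),
        (∀ n, (a n, as n) ∈ A) ∧
        Filter.Tendsto a Filter.atTop (nhds (x₀ + lam • (z - x₀))) ∧
        Filter.Tendsto (fun n => (as n) (z - a n)) Filter.atTop Filter.atTop :=
  exists_unbounded_seq_of_not_mem_closure_general A hFPV x₀ hx₀ z hz
end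
end

section
/- Let X be a real Banach space and let B : X ⇉ X* be maximally monotone. Suppose x ∈ X with x ∉ dom B, and let (c_k, c_k*) be a sequence in gra B with c_k → x in norm. Then the sequence (‖c_k*‖) is unbounded. -/
open Set Filter Topology

noncomputable section

variable {X : Type*} [NormedAddCommGroup X] [NormedSpace ℝ X]

/-!
If `‖c_k*‖ ≤ M`, Banach–Alaoglu gives a weak* limit `φ` of `c_k*` along an ultrafilter finer than
`atTop`. Along it, `⟨c_k − y, c_k* − y*⟩ → ⟨x − y, φ − y*⟩` for every `(y, y*) ∈ gra B`, since the
error term `⟨c_k − x, c_k* − y*⟩` is at most `(M + ‖y*‖) ‖c_k − x‖`. Hence `(x, φ)` is monotonically related to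
`gra B`, and maximality forces `x ∈ dom B`.
-/

section

variable {𝕜 E F ι : Type*} [NontriviallyNormedField 𝕜] [NormedAddCommGroup E] [NormedSpace 𝕜 E]
  [NormedAddCommGroup F] [NormedSpace 𝕜 F] {l : Filter ι}

theorem tendsto_apply_of_norm_le_of_tendsto {f : ι → E →L[𝕜] F} {g : ι → E} {x : E} {y : F}
    {M : ℝ} (hM : ∀ᶠ i in l, ‖f i‖ ≤ M) (hg : Tendsto g l (𝓝 x))
    (hfx : Tendsto (fun i => f i x) l (𝓝 y)) :
    Tendsto (fun i => f i (g i)) l (𝓝 y) := by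
  have hsmall : Tendsto (fun i => f i (g i - x)) l (𝓝 0) := by
    refine squeeze_zero_norm' ?_ (by simpa using (hg.sub_const x).norm.const_mul M)
    filter_upwards [hM] with i hi
    exact (f i).le_of_opNorm_le hi _
  simpa [map_sub] using hsmall.add hfx

theorem ContinuousLinearMap.sub_apply_sub_comm (a b : E →L[𝕜] F) (u v : E) :
    (a - b) (u - v) = (b - a) (v - u) := by
  rw [← neg_sub b a, ← neg_sub v u, map_neg, neg_apply, neg_neg]

end

section

variable {𝕜 E ι : Type*} [RCLike 𝕜] [NormedAddCommGroup E] [NormedSpace 𝕜 E]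

/-- An ultrafilter rather than a subsequence: bounded sets of the weak* dual need not be
sequentially compact. -/
theorem exists_ultrafilter_tendsto_apply_of_norm_le (l : Filter ι) [l.NeBot]
    {f : ι → E →L[𝕜] 𝕜} {M : ℝ} (hM : ∀ i, ‖f i‖ ≤ M) :
    ∃ U : Ultrafilter ι, ↑U ≤ l ∧ ∃ φ : E →L[𝕜] 𝕜, ∀ z, Tendsto (fun i => f i z) U (𝓝 (φ z)) := by
  obtain ⟨φ, -, hφ⟩ := (WeakDual.isCompact_closedBall (0 : E →L[𝕜] 𝕜) M).ultrafilter_le_nhds'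
    ((Ultrafilter.of l).map fun i => StrongDual.toWeakDual (f i))
    (Ultrafilter.mem_map.2 (univ_mem' fun i => by simpa using hM i))
  exact ⟨Ultrafilter.of l, Ultrafilter.of_le l, WeakDual.toStrongDual φ,
    fun z => (WeakDual.eval_continuous z).continuousAt.tendsto.comp hφ⟩

end

theorem IsMaxMonotoneOp.mem_of_monotonicallyRelated_s14 {A : Set (X × (X →L[ℝ] ℝ))}
    (hA : IsMaxMonotoneOp A) {p : X × (X →L[ℝ] ℝ)} (hp : MonotonicallyRelated A p) : p ∈ A := by
  have hmono : IsMonotoneOp (insert p A) := by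
    rintro q (rfl | hq) r (rfl | hr)
    · simp
    · exact hp r hr
    · rw [ContinuousLinearMap.sub_apply_sub_comm]; exact hp q hq
    · exact hA.1 q hq r hr
  exact hA.2 _ hmono (subset_insert p A) ▸ mem_insert p A

theorem MonotonicallyRelated.of_tendsto {ι : Type*} {l : Filter ι} [l.NeBot]
    {S : Set (X × (X →L[ℝ] ℝ))} {c : ι → X × (X →L[ℝ] ℝ)} {x : X} {φ : X →L[ℝ] ℝ} {M : ℝ}
    (hc : ∀ᶠ i in l, MonotonicallyRelated S (c i)) (hM : ∀ᶠ i in l, ‖(c i).2‖ ≤ M)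
    (h₁ : Tendsto (fun i => (c i).1) l (𝓝 x)) (h₂ : ∀ z, Tendsto (fun i => (c i).2 z) l (𝓝 (φ z))) :
    MonotonicallyRelated S (x, φ) := by
  rintro ⟨y, ys⟩ hq
  have hlim : Tendsto (fun i => ((c i).2 - ys) ((c i).1 - y)) l (𝓝 ((φ - ys) (x - y))) := by
    refine tendsto_apply_of_norm_le_of_tendsto (M := M + ‖ys‖) ?_ (h₁.sub_const y) ?_
    · filter_upwards [hM] with i hi
      exact (norm_sub_le _ _).trans (by linarith)
    · exact (h₂ (x - y)).sub_const (ys (x - y))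
  exact ge_of_tendsto hlim (hc.mono fun i hi => hi _ hq)

theorem unbounded_of_tendsto_not_mem_dom_general {X : Type*} [NormedAddCommGroup X] [NormedSpace ℝ X]
    (B : Set (X × (X →L[ℝ] ℝ)))
    (hB : IsMaxMonotoneOp B)
    (x : X) (hx : x ∉ opDom B)
    (c : ℕ → X × (X →L[ℝ] ℝ))
    (hc : ∀ k, c k ∈ B)
    (hconv : Filter.Tendsto (fun k => (c k).1) Filter.atTop (nhds x)) :
    ¬ BddAbove (Set.range fun k => ‖(c k).2‖) := by
  rintro ⟨M, hM⟩
  have hbound : ∀ k, ‖(c k).2‖ ≤ M := fun k => hM (mem_range_self k)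
  obtain ⟨U, hU, φ, hφ⟩ := exists_ultrafilter_tendsto_apply_of_norm_le atTop hbound
  have hrel : MonotonicallyRelated B (x, φ) :=
    .of_tendsto (.of_forall fun k => hB.1 _ (hc k)) (.of_forall hbound) (hconv.mono_left hU) hφ
  exact hx ⟨φ, hB.mem_of_monotonicallyRelated_s14 hrel⟩

/-- a sequence in the graph of a maximally monotone operator whose
first coordinates converge to a point outside the domain has unbounded dual norms. -/
theorem unbounded_of_tendsto_not_mem_dom {X : Type*} [NormedAddCommGroup X] [NormedSpace ℝ X]
    [CompleteSpace X]
    (B : Set (X × (X →L[ℝ] ℝ)))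
    (hB : IsMaxMonotoneOp B)
    (x : X) (hx : x ∉ opDom B)
    (c : ℕ → X × (X →L[ℝ] ℝ))
    (hc : ∀ k, c k ∈ B)
    (hconv : Filter.Tendsto (fun k => (c k).1) Filter.atTop (nhds x)) :
    ¬ BddAbove (Set.range fun k => ‖(c k).2‖) :=
  unbounded_of_tendsto_not_mem_dom_general B hB x hx c hc hconv
end
end
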